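/- For every δ ∈ (0,1) and every nonempty A ⊆ {0,1}^n, there exists a Santha-Vazirani distribution μ with bias δ on {0,1}^n such that μ(A) ≥ ((1+δ)/2)^{n − log₂|A|}. -/

import Mathlib

open Finset

/-- `μ` is a probability distribution on the finite type `A`. -/
def IsDist {A : Type*} [Fintype A] (μ : A → ℝ) : Prop :=
  (∀ a, 0 ≤ μ a) ∧ ∑ a, μ a = 1

open Classical in
/-- Probability of an event under a distribution on a finite type. -/
noncomputable def Pr {A : Type*} [Fintype A] (μ : A → ℝ) (p : A → Prop) : ℝ :=
  ∑ a, if p a then μ a else 0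

/-- `μ` is a Santha-Vazirani distribution with bias `δ`: for every bit `i` and every
prefix `z` of positive probability, `P[Xᵢ = 1 | prefix] ∈ [(1−δ)/2, (1+δ)/2]`. -/
def IsSV {n : ℕ} (δ : ℝ) (μ : (Fin n → Bool) → ℝ) : Prop :=
  ∀ (i : Fin n) (z : Fin n → Bool),
    0 < Pr μ (fun x => ∀ j, j < i → x j = z j) →
      (1 - δ) / 2 * Pr μ (fun x => ∀ j, j < i → x j = z j)
          ≤ Pr μ (fun x => x i = true ∧ ∀ j, j < i → x j = z j) ∧
        Pr μ (fun x => x i = true ∧ ∀ j, j < i → x j = z j)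
          ≤ (1 + δ) / 2 * Pr μ (fun x => ∀ j, j < i → x j = z j)

/-!
Put `q = (1 + δ) / 2` and `α = -log₂ q ∈ (0, 1]`, so that `q ^ (n - log₂ k) = q ^ n * k ^ α`.
Reveal the bits one at a time: split `A` by its first bit into halves of sizes `a ≥ b`, give
the larger half probability `q`, and recurse into each half. Every conditional bit probability is
then `q` or `1 - q`, and by induction `μ(A) ≥ q ^ n * |A| ^ α`. The induction step is
`q (a + b) ^ α ≤ q a ^ α + (1 - q) b ^ α`; since `2 ^ α = 1 / q` it says
`(a + b) ^ α - a ^ α ≤ (2b) ^ α - b ^ α`, the decrease of the increments of the concave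
function `t ↦ t ^ α`.
-/

theorem ConcaveOn.map_add_sub_map_le_of_le {f : ℝ → ℝ} {s : Set ℝ} (hf : ConcaveOn ℝ s f)
    {x y d : ℝ} (hx : x ∈ s) (hyd : y + d ∈ s) (hxy : x ≤ y) (hd : 0 ≤ d) :
    f (y + d) - f y ≤ f (x + d) - f x := by
  obtain hxyd | hxyd := (hxy.trans (le_add_of_nonneg_right hd)).eq_or_lt
  · obtain rfl : d = 0 := by linarith
    obtain rfl : y = x := by linarith
    rfl
  -- both `x + d` and `y` are convex combinations of `x` and `y + d`, with swapped weights
  set t := d / (y + d - x)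
  have ht0 : 0 ≤ t := div_nonneg hd (by linarith)
  have ht1 : t ≤ 1 := div_le_one_of_le₀ (by linarith) (by linarith)
  have hxd := hf.2 hx hyd (sub_nonneg.2 ht1) ht0 (sub_add_cancel 1 t)
  have hy := hf.2 hx hyd ht0 (sub_nonneg.2 ht1) (add_sub_cancel t 1)
  have e1 : (1 - t) • x + t • (y + d) = x + d := by
    simp only [t, smul_eq_mul]; field_simp; ring
  have e2 : t • x + (1 - t) • (y + d) = y := by
    simp only [t, smul_eq_mul]; field_simp; ring
  rw [e1] at hxd
  rw [e2] at hy
  simp only [smul_eq_mul] at hxd hy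
  linear_combination hxd + hy

theorem mul_add_rpow_neg_logb_le {q a b : ℝ} (hq : 1 / 2 ≤ q) (hq1 : q ≤ 1) (hb : 0 ≤ b)
    (hba : b ≤ a) :
    q * (a + b) ^ (-Real.logb 2 q)
      ≤ q * a ^ (-Real.logb 2 q) + (1 - q) * b ^ (-Real.logb 2 q) := by
  have hq0 : 0 < q := by linarith
  set α := -Real.logb 2 q
  have hα0 : 0 ≤ α := neg_nonneg.2 (Real.logb_nonpos one_lt_two hq0.le hq1)
  have hα1 : α ≤ 1 := by
    have : (2 : ℝ) ^ (-1 : ℝ) ≤ q := by rw [Real.rpow_neg_one]; linarith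
    have := (Real.le_logb_iff_rpow_le one_lt_two hq0).2 this
    linarith
  have h2b : (b + b) ^ α = q⁻¹ * b ^ α := by
    rw [← two_mul, Real.mul_rpow zero_le_two hb, Real.rpow_neg zero_le_two,
      Real.rpow_logb two_pos (by norm_num) hq0]
  have hconc := (Real.concaveOn_rpow hα0 hα1).map_add_sub_map_le_of_le hb
    (Set.mem_Ici.2 (by linarith : (0 : ℝ) ≤ a + b)) hba hb
  rw [h2b] at hconc
  have := mul_le_mul_of_nonneg_left hconc hq0.le
  rw [mul_sub, mul_sub, ← mul_assoc, mul_inv_cancel₀ hq0.ne', one_mul] at this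
  linarith

theorem rpow_sub_logb_eq_mul_rpow {b q k : ℝ} (hq : 0 < q) (hk : 0 < k) (m : ℝ) :
    q ^ (m - Real.logb b k) = q ^ m * k ^ (-Real.logb b q) := by
  rw [sub_eq_add_neg, Real.rpow_add hq]
  congr 1
  rw [Real.rpow_def_of_pos hq, Real.rpow_def_of_pos hk, Real.logb, Real.logb]
  ring_nf

theorem Fintype.sum_bool_eq_add_not {M : Type*} [AddCommMonoid M] (c : Bool) (f : Bool → M) :
    ∑ b, f b = f c + f !c := by
  cases c <;> simp [add_comm]

theorem Pr_congr {α : Type*} [Fintype α] (μ : α → ℝ) {P R : α → Prop} (h : ∀ x, P x ↔ R x) :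
    Pr μ P = Pr μ R :=
  congrArg (Pr μ) (funext fun x => propext (h x))

theorem Pr_true {α : Type*} [Fintype α] (μ : α → ℝ) : Pr μ (fun _ => True) = ∑ x, μ x := by
  simp [Pr]

section ConsDist

variable {n : ℕ}

theorem sum_univ_eq_sum_cons {M : Type*} [AddCommMonoid M] (f : (Fin (n + 1) → Bool) → M) :
    ∑ x, f x = ∑ b, ∑ y, f (Fin.cons b y) := by
  rw [← Fintype.sum_equiv (Fin.consEquiv fun _ => Bool) (fun p => f (Fin.cons p.1 p.2)) f
    fun _ => rfl, Fintype.sum_prod_type]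

def consFiber (A : Finset (Fin (n + 1) → Bool)) (b : Bool) : Finset (Fin n → Bool) :=
  univ.filter fun y => Fin.cons b y ∈ A

theorem sum_eq_sum_consFiber {M : Type*} [AddCommMonoid M] (A : Finset (Fin (n + 1) → Bool))
    (f : (Fin (n + 1) → Bool) → M) :
    ∑ x ∈ A, f x = ∑ b, ∑ y ∈ consFiber A b, f (Fin.cons b y) := by
  classical
  rw [← univ_inter A, ← sum_ite_mem, sum_univ_eq_sum_cons]
  simp only [consFiber, sum_filter, univ_inter]

theorem card_eq_sum_card_consFiber (A : Finset (Fin (n + 1) → Bool)) :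
    #A = ∑ b, #(consFiber A b) := by
  simpa only [card_eq_sum_ones] using sum_eq_sum_consFiber A fun _ => 1

def consDist (p : Bool → ℝ) (ν : Bool → (Fin n → Bool) → ℝ) : (Fin (n + 1) → Bool) → ℝ :=
  fun x => p (x 0) * ν (x 0) (Fin.tail x)

variable {p : Bool → ℝ} {ν : Bool → (Fin n → Bool) → ℝ}

theorem sum_mem_consDist (A : Finset (Fin (n + 1) → Bool)) :
    ∑ x ∈ A, consDist p ν x = ∑ b, p b * ∑ y ∈ consFiber A b, ν b y := by
  simp [sum_eq_sum_consFiber A, consDist, mul_sum]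

theorem Pr_consDist (c : Bool) (P : (Fin n → Bool) → Prop) :
    Pr (consDist p ν) (fun x => x 0 = c ∧ P (Fin.tail x)) = p c * Pr (ν c) P := by
  classical
  unfold Pr
  rw [sum_univ_eq_sum_cons]
  cases c <;> simp [consDist, mul_sum]

theorem isDist_consDist (hp : IsDist p) (hν : ∀ b, IsDist (ν b)) : IsDist (consDist p ν) := by
  refine ⟨fun x => mul_nonneg (hp.1 _) ((hν _).1 _), ?_⟩
  rw [sum_univ_eq_sum_cons]
  simp only [consDist, Fin.cons_zero, Fin.tail_cons, ← mul_sum, (hν _).2, mul_one]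
  exact hp.2

theorem isSV_consDist {δ : ℝ} (hp : IsDist p) (hν : ∀ b, IsDist (ν b)) (hsv : ∀ b, IsSV δ (ν b))
    (hlo : (1 - δ) / 2 ≤ p true) (hhi : p true ≤ (1 + δ) / 2) : IsSV δ (consDist p ν) := by
  intro i z hpos
  induction i using Fin.cases with
  | zero =>
    have hprefix : Pr (consDist p ν) (fun x => ∀ j, j < 0 → x j = z j) = 1 := by
      rw [Pr_congr _ (R := fun _ => True) fun x => by simp, Pr_true, (isDist_consDist hp hν).2]
    have hbit : Pr (consDist p ν) (fun x => x 0 = true ∧ ∀ j, j < 0 → x j = z j)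
        = p true * Pr (ν true) (fun _ => True) := by
      rw [← Pr_consDist]
      exact Pr_congr _ fun x => by simp
    rw [hprefix, hbit, Pr_true, (hν true).2]
    constructor <;> linarith
  | succ i =>
    have hprefix : Pr (consDist p ν) (fun x => ∀ j, j < i.succ → x j = z j)
        = p (z 0) * Pr (ν (z 0)) (fun y => ∀ j, j < i → y j = Fin.tail z j) := by
      rw [← Pr_consDist]
      exact Pr_congr _ fun x => by simp [Fin.forall_fin_succ, Fin.succ_pos, Fin.tail]
    have hbit : Pr (consDist p ν) (fun x => x i.succ = true ∧ ∀ j, j < i.succ → x j = z j)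
        = p (z 0) * Pr (ν (z 0)) (fun y => y i = true ∧ ∀ j, j < i → y j = Fin.tail z j) := by
      rw [← Pr_consDist]
      exact Pr_congr _ fun x => by simp [Fin.forall_fin_succ, Fin.succ_pos, Fin.tail]; tauto
    rw [hprefix] at hpos
    obtain ⟨hlo', hhi'⟩ := hsv (z 0) i (Fin.tail z) (pos_of_mul_pos_right hpos (hp.1 _))
    rw [hprefix, hbit, mul_left_comm, mul_left_comm _ (p (z 0))]
    exact ⟨mul_le_mul_of_nonneg_left hlo' (hp.1 _), mul_le_mul_of_nonneg_left hhi' (hp.1 _)⟩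

end ConsDist

section Greedy

variable {n : ℕ}

def heavyBit (A : Finset (Fin (n + 1) → Bool)) : Bool :=
  decide (#(consFiber A false) ≤ #(consFiber A true))

theorem card_consFiber_not_heavyBit_le (A : Finset (Fin (n + 1) → Bool)) :
    #(consFiber A !heavyBit A) ≤ #(consFiber A (heavyBit A)) := by
  by_cases h : #(consFiber A false) ≤ #(consFiber A true)
  · simp [heavyBit, h]
  · simp only [heavyBit, h, decide_false, Bool.not_false]
    omega

def biasedBit (q : ℝ) (c : Bool) : Bool → ℝ := fun b => if b = c then q else 1 - q

theorem isDist_biasedBit {q : ℝ} (hq0 : 0 ≤ q) (hq1 : q ≤ 1) (c : Bool) :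
    IsDist (biasedBit q c) :=
  ⟨fun b => by unfold biasedBit; split_ifs <;> linarith, by cases c <;> simp [biasedBit]⟩

noncomputable def svGreedy (q : ℝ) : (n : ℕ) → Finset (Fin n → Bool) → (Fin n → Bool) → ℝ
  | 0, _ => fun _ => 1
  | n + 1, A => consDist (biasedBit q (heavyBit A)) fun b => svGreedy q n (consFiber A b)

theorem isDist_svGreedy {q : ℝ} (hq0 : 0 ≤ q) (hq1 : q ≤ 1) :
    ∀ (n : ℕ) (A : Finset (Fin n → Bool)), IsDist (svGreedy q n A)
  | 0, _ => ⟨fun _ => zero_le_one, by simp [svGreedy]⟩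
  | n + 1, A => isDist_consDist (isDist_biasedBit hq0 hq1 _) fun b => isDist_svGreedy hq0 hq1 n _

theorem isSV_svGreedy {δ : ℝ} (hδ0 : 0 ≤ δ) (hδ1 : δ ≤ 1) :
    ∀ (n : ℕ) (A : Finset (Fin n → Bool)), IsSV δ (svGreedy ((1 + δ) / 2) n A)
  | 0, _ => fun i => i.elim0
  | n + 1, A => by
    refine isSV_consDist (isDist_biasedBit (by linarith) (by linarith) _)
      (fun _ => isDist_svGreedy (by linarith) (by linarith) n _)
      (fun _ => isSV_svGreedy hδ0 hδ1 n _) ?_ ?_ <;>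
    unfold biasedBit <;> split_ifs <;> linarith

theorem pow_mul_card_rpow_le_sum_svGreedy {q : ℝ} (hq : 1 / 2 ≤ q) (hq1 : q < 1) :
    ∀ (n : ℕ) (A : Finset (Fin n → Bool)),
      q ^ n * (#A : ℝ) ^ (-Real.logb 2 q) ≤ ∑ x ∈ A, svGreedy q n A x
  | 0, A => by
    have hα : -Real.logb 2 q ≠ 0 := (neg_pos.2 (Real.logb_neg one_lt_two (by linarith) hq1)).ne'
    have hcard : #A ≤ 1 := by simpa using card_le_univ A
    simp only [svGreedy, sum_const, nsmul_one, pow_zero, one_mul]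
    rcases Nat.le_one_iff_eq_zero_or_eq_one.1 hcard with h | h <;> simp [h, hα]
  | n + 1, A => by
    rw [svGreedy, sum_mem_consDist]
    set c := heavyBit A
    set α := -Real.logb 2 q
    have hS (b : Bool) : q ^ n * (#(consFiber A b) : ℝ) ^ α
        ≤ ∑ y ∈ consFiber A b, svGreedy q n (consFiber A b) y :=
      pow_mul_card_rpow_le_sum_svGreedy hq hq1 n _
    have hle : (#(consFiber A !c) : ℝ) ≤ #(consFiber A c) := by
      exact_mod_cast card_consFiber_not_heavyBit_le A
    have hcard : (#A : ℝ) = #(consFiber A c) + #(consFiber A !c) := by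
      rw [card_eq_sum_card_consFiber, Fintype.sum_bool_eq_add_not c, Nat.cast_add]
    rw [Fintype.sum_bool_eq_add_not c, hcard]
    simp only [biasedBit, if_neg (Bool.not_ne_self c)]
    calc q ^ (n + 1) * (#(consFiber A c) + #(consFiber A !c) : ℝ) ^ α
        = q ^ n * (q * (#(consFiber A c) + #(consFiber A !c) : ℝ) ^ α) := by ring
      _ ≤ q ^ n * (q * (#(consFiber A c) : ℝ) ^ α + (1 - q) * (#(consFiber A !c) : ℝ) ^ α) :=
        mul_le_mul_of_nonneg_left
          (mul_add_rpow_neg_logb_le hq hq1.le (Nat.cast_nonneg _) hle) (by positivity)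
      _ = q * (q ^ n * (#(consFiber A c) : ℝ) ^ α)
          + (1 - q) * (q ^ n * (#(consFiber A !c) : ℝ) ^ α) := by ring
      _ ≤ _ := add_le_add (mul_le_mul_of_nonneg_left (hS c) (by linarith))
          (mul_le_mul_of_nonneg_left (hS _) (by linarith))

end Greedy

/-- For every `δ ∈ (0,1)` and nonempty `A ⊆ {0,1}^n`, some SV distribution with bias `δ`
gives `A` probability at least `((1+δ)/2)^(n − log₂|A|)`. -/
theorem sv_hits_set {n : ℕ} (δ : ℝ) (hδ0 : 0 < δ) (hδ1 : δ < 1)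
    (A : Finset (Fin n → Bool)) (hA : A.Nonempty) :
    ∃ μ : (Fin n → Bool) → ℝ, IsDist μ ∧ IsSV δ μ ∧
      ((1 + δ) / 2) ^ ((n : ℝ) - Real.logb 2 (A.card)) ≤ ∑ x ∈ A, μ x := by
  refine ⟨svGreedy ((1 + δ) / 2) n A, isDist_svGreedy (by linarith) (by linarith) n A,
    isSV_svGreedy hδ0.le hδ1.le n A, ?_⟩
  rw [rpow_sub_logb_eq_mul_rpow (by linarith) (mod_cast hA.card_pos), Real.rpow_natCast]
  exact pow_mul_card_rpow_le_sum_svGreedy (by linarith) (by linarith) n A
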